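/- arXiv:1911.06736 — 5 statements merged into one kernel-verified Lean document; each statement's English description precedes it below -/
import Mathlib

section
/- Let T₀ = X and T_{i+1} = (T_i ⊖ AⁱEW) ⊕ Aⁱ(−BU). Define S_i = X ⊕ [⊕_{j=0}^{i-2} Aʲ(−BU)] ⊖ [⊕_{j=0}^{i-1} AʲEW]. If S_{i⋆} = ∅ for some i⋆ > 0, then T_i = ∅ for all i ≥ i⋆. -/
/-!
Unrolling the recursion and using `(P ⊖ Q) ⊕ R ⊆ (P ⊕ R) ⊖ Q` and `(P ⊖ Q) ⊖ R = P ⊖ (Q ⊕ R)`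
gives `T_i ⊆ S_i ⊕ A^{i-1}(−BU)` for `i ≥ 1`, so `S_{i⋆} = ∅` forces `T_{i⋆} = ∅`.
Emptiness then persists, because `∅ ⊖ Q = ∅` for nonempty `Q`, and each `AⁱEW` contains `0`.
-/

open Matrix

/-- Minkowski sum. -/
def msum {n : ℕ} (A B : Set (Fin n → ℝ)) : Set (Fin n → ℝ) :=
  {w | ∃ a ∈ A, ∃ b ∈ B, w = a + b}

/-- Minkowski difference. -/
def mdiff {n : ℕ} (A B : Set (Fin n → ℝ)) : Set (Fin n → ℝ) :=
  {x | ∀ b ∈ B, b + x ∈ A}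

/-- Iterated Minkowski sum ⊕_{j=0}^{k-1} f j, with the empty sum equal to {0}. -/
def bigMsum {n : ℕ} : ℕ → (ℕ → Set (Fin n → ℝ)) → Set (Fin n → ℝ)
  | 0, _ => {0}
  | k + 1, f => msum (bigMsum k f) (f k)

open scoped Pointwise

section MinkowskiCalculus

variable {n : ℕ}

lemma msum_eq_add (P Q : Set (Fin n → ℝ)) : msum P Q = P + Q := by
  ext x
  simp only [msum, Set.mem_ofPred_eq, Set.mem_add, eq_comm]

lemma bigMsum_zero (f : ℕ → Set (Fin n → ℝ)) : bigMsum 0 f = 0 := rfl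

lemma bigMsum_succ (k : ℕ) (f : ℕ → Set (Fin n → ℝ)) :
    bigMsum (k + 1) f = bigMsum k f + f k :=
  msum_eq_add _ _

lemma mdiff_mono_left {P P' : Set (Fin n → ℝ)} (h : P ⊆ P') (Q : Set (Fin n → ℝ)) :
    mdiff P Q ⊆ mdiff P' Q :=
  fun _ hx q hq => h (hx q hq)

lemma mdiff_mdiff (P Q R : Set (Fin n → ℝ)) : mdiff (mdiff P Q) R = mdiff P (Q + R) := by
  ext x
  constructor
  · rintro hx _ ⟨q, hq, r, hr, rfl⟩
    rw [add_assoc]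
    exact hx r hr q hq
  · intro hx r hr q hq
    rw [← add_assoc]
    exact hx _ ⟨q, hq, r, hr, rfl⟩

lemma mdiff_add_subset (P Q R : Set (Fin n → ℝ)) : mdiff P Q + R ⊆ mdiff (P + R) Q := by
  rintro _ ⟨x, hx, r, hr, rfl⟩ q hq
  exact ⟨q + x, hx q hq, r, hr, add_assoc q x r⟩

lemma empty_mdiff {Q : Set (Fin n → ℝ)} (hQ : Q.Nonempty) : mdiff ∅ Q = ∅ := by
  obtain ⟨q, hq⟩ := hQ
  exact Set.eq_empty_of_forall_notMem fun x hx => hx q hq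

end MinkowskiCalculus

section Recursion

variable {n : ℕ} {X : Set (Fin n → ℝ)} {D V T : ℕ → Set (Fin n → ℝ)}

lemma recursion_succ_subset (hT0 : T 0 = X)
    (hTs : ∀ i, T (i + 1) = mdiff (T i) (D i) + V i) (i : ℕ) :
    T (i + 1) ⊆ mdiff (X + bigMsum i V) (bigMsum (i + 1) D) + V i := by
  induction i with
  | zero => simp only [hTs 0, hT0, bigMsum_succ, bigMsum_zero, zero_add, add_zero, subset_rfl]
  | succ i ih =>
    rw [hTs (i + 1)]
    gcongr
    calc mdiff (T (i + 1)) (D (i + 1))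
        ⊆ mdiff (mdiff (X + bigMsum i V) (bigMsum (i + 1) D) + V i) (D (i + 1)) :=
          mdiff_mono_left ih _
      _ ⊆ mdiff (mdiff (X + bigMsum i V + V i) (bigMsum (i + 1) D)) (D (i + 1)) :=
          mdiff_mono_left (mdiff_add_subset _ _ _) _
      _ = mdiff (X + bigMsum (i + 1) V) (bigMsum (i + 1 + 1) D) := by
          rw [mdiff_mdiff, bigMsum_succ i V, bigMsum_succ (i + 1) D, add_assoc]

lemma recursion_eq_empty_of_le (hD : ∀ i, (D i).Nonempty)
    (hTs : ∀ i, T (i + 1) = mdiff (T i) (D i) + V i) {k : ℕ} (hk : T k = ∅) :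
    ∀ i ≥ k, T i = ∅ := by
  intro i hi
  induction i, hi using Nat.le_induction with
  | base => exact hk
  | succ i _ ih => rw [hTs i, ih, empty_mdiff (hD i), Set.empty_add]

end Recursion

theorem T_empty_of_S_empty_general {n m p : ℕ}
    (A : Matrix (Fin n) (Fin n) ℝ) (B : Matrix (Fin n) (Fin m) ℝ)
    (E : Matrix (Fin n) (Fin p) ℝ)
    (X : Set (Fin n → ℝ)) (U : Set (Fin m → ℝ)) (W : Set (Fin p → ℝ))
    (hW0 : 0 ∈ interior W)
    (T : ℕ → Set (Fin n → ℝ))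
    (hT0 : T 0 = X)
    (hTs : ∀ i, T (i + 1)
      = msum (mdiff (T i) ((A ^ i).mulVec '' (E.mulVec '' W)))
          ((A ^ i).mulVec '' ((fun u => -u) '' (B.mulVec '' U))))
    (S : ℕ → Set (Fin n → ℝ))
    (hS : ∀ i, S i =
      mdiff
        (msum X (bigMsum (i - 1) (fun j => (A ^ j).mulVec '' ((fun u => -u) '' (B.mulVec '' U)))))
        (bigMsum i (fun j => (A ^ j).mulVec '' (E.mulVec '' W))))
    (istar : ℕ) (histar : 0 < istar) (hempty : S istar = ∅) :
    ∀ i ≥ istar, T i = ∅ := by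
  simp only [msum_eq_add] at hTs hS
  obtain ⟨k, rfl⟩ := Nat.exists_eq_add_one_of_ne_zero histar.ne'
  have hSk := hS (k + 1)
  rw [Nat.add_sub_cancel, hempty] at hSk
  have hTk : T (k + 1) = ∅ := by
    have h := recursion_succ_subset hT0 hTs k
    rwa [← hSk, Set.empty_add, Set.subset_empty_iff] at h
  have hWne : W.Nonempty := ⟨0, interior_subset hW0⟩
  exact recursion_eq_empty_of_le (fun i => (hWne.image _).image _) hTs hTk

/-- With T₀ = X, T_{i+1} = (T_i ⊖ AⁱEW) ⊕ Aⁱ(−BU), and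
    S_i = X ⊕ [⊕_{j=0}^{i-2} Aʲ(−BU)] ⊖ [⊕_{j=0}^{i-1} AʲEW]:
    if S_{i⋆} = ∅ for some i⋆ > 0, then T_i = ∅ for all i ≥ i⋆. -/
theorem T_empty_of_S_empty {n m p : ℕ}
    (A : Matrix (Fin n) (Fin n) ℝ) (B : Matrix (Fin n) (Fin m) ℝ)
    (E : Matrix (Fin n) (Fin p) ℝ)
    (X : Set (Fin n → ℝ)) (U : Set (Fin m → ℝ)) (W : Set (Fin p → ℝ))
    (hXc : IsCompact X) (hXcv : Convex ℝ X) (hX0 : 0 ∈ interior X)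
    (hUc : IsCompact U) (hUcv : Convex ℝ U) (hU0 : 0 ∈ interior U)
    (hWc : IsCompact W) (hWcv : Convex ℝ W) (hW0 : 0 ∈ interior W)
    (T : ℕ → Set (Fin n → ℝ))
    (hT0 : T 0 = X)
    (hTs : ∀ i, T (i + 1)
      = msum (mdiff (T i) ((A ^ i).mulVec '' (E.mulVec '' W)))
          ((A ^ i).mulVec '' ((fun u => -u) '' (B.mulVec '' U))))
    (S : ℕ → Set (Fin n → ℝ))
    (hS : ∀ i, S i =
      mdiff
        (msum X (bigMsum (i - 1) (fun j => (A ^ j).mulVec '' ((fun u => -u) '' (B.mulVec '' U)))))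
        (bigMsum i (fun j => (A ^ j).mulVec '' (E.mulVec '' W))))
    (istar : ℕ) (histar : 0 < istar) (hempty : S istar = ∅) :
    ∀ i ≥ istar, T i = ∅ :=
  T_empty_of_S_empty_general A B E X U W hW0 T hT0 hTs S hS istar histar hempty
end

section
/- Define C₀ = X and C_{i+1} = {x ∈ X : ∃ u ∈ U, ∀ w ∈ W, Ax + Bu + Ew ∈ C_i}. Define T₀ = X, T_{i+1} = (T_i ⊖ AⁱEW) ⊕ Aⁱ(−BU). Then for every i ∈ ℕ, C_i ⊆ ⋂_{j=0}^{i} (Aʲ)⁻¹ T_j, where (Aʲ)⁻¹ denotes preimage under Aʲ. -/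
open Matrix

/- `Aᵏ⁺¹x = (Aᵏ⁺¹x + AᵏBu) + (−AᵏBu)`, and the first summand stays in `S` under every shift
`AᵏEw` because `AᵏEw + (Aᵏ⁺¹x + AᵏBu) = Aᵏ(Ax + Bu + Ew)`. -/
theorem pow_succ_mulVec_mem_msum_mdiff {n m p : ℕ} (A : Matrix (Fin n) (Fin n) ℝ)
    (B : Matrix (Fin n) (Fin m) ℝ) (E : Matrix (Fin n) (Fin p) ℝ)
    (U : Set (Fin m → ℝ)) (W : Set (Fin p → ℝ)) (S : Set (Fin n → ℝ)) (k : ℕ)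
    {x : Fin n → ℝ} {u : Fin m → ℝ} (hu : u ∈ U)
    (hS : ∀ w ∈ W, A ^ k *ᵥ (A *ᵥ x + B *ᵥ u + E *ᵥ w) ∈ S) :
    A ^ (k + 1) *ᵥ x ∈ msum (mdiff S ((A ^ k).mulVec '' (E.mulVec '' W)))
      ((A ^ k).mulVec '' ((fun u => -u) '' (B.mulVec '' U))) := by
  refine ⟨A ^ (k + 1) *ᵥ x + A ^ k *ᵥ (B *ᵥ u), ?_, -(A ^ k *ᵥ (B *ᵥ u)),
    ⟨-(B *ᵥ u), ⟨B *ᵥ u, ⟨u, hu, rfl⟩, rfl⟩, mulVec_neg _ _⟩, by abel⟩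
  rintro _ ⟨_, ⟨w, hw, rfl⟩, rfl⟩
  convert hS w hw using 1
  simp only [mulVec_add, mulVec_mulVec, pow_succ]
  abel

theorem C_subset_inter_preimage_T_general {n m p : ℕ}
    (A : Matrix (Fin n) (Fin n) ℝ) (B : Matrix (Fin n) (Fin m) ℝ)
    (E : Matrix (Fin n) (Fin p) ℝ)
    (X : Set (Fin n → ℝ)) (U : Set (Fin m → ℝ)) (W : Set (Fin p → ℝ))
    (C : ℕ → Set (Fin n → ℝ))
    (hC0 : C 0 = X)
    (hCs : ∀ i, C (i + 1)
      = {x ∈ X | ∃ u ∈ U, ∀ w ∈ W, A *ᵥ x + B *ᵥ u + E *ᵥ w ∈ C i})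
    (T : ℕ → Set (Fin n → ℝ))
    (hT0 : T 0 = X)
    (hTs : ∀ i, T (i + 1)
      = msum (mdiff (T i) ((A ^ i).mulVec '' (E.mulVec '' W)))
          ((A ^ i).mulVec '' ((fun u => -u) '' (B.mulVec '' U)))) :
    ∀ i, C i ⊆ ⋂ j ∈ Set.Iic i, (A ^ j).mulVec ⁻¹' (T j) := by
  have hCX : ∀ i, C i ⊆ X := by
    rintro (_ | i) x hx
    · rwa [hC0] at hx
    · rw [hCs] at hx
      exact hx.1
  suffices h : ∀ j i, j ≤ i → ∀ x ∈ C i, A ^ j *ᵥ x ∈ T j from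
    fun i x hx => Set.mem_iInter₂.mpr fun j hj => h j i hj x hx
  intro j
  induction j with
  | zero =>
    intro i _ x hx
    simpa [hT0] using hCX i hx
  | succ k ih =>
    rintro (_ | i) hki x hx
    · omega
    rw [hCs] at hx
    obtain ⟨-, u, hu, hxu⟩ := hx
    rw [hTs]
    exact pow_succ_mulVec_mem_msum_mdiff A B E U W _ k hu fun w hw =>
      ih i (by omega) _ (hxu w hw)

/-- With C₀ = X, C_{i+1} = {x ∈ X : ∃ u ∈ U, ∀ w ∈ W, Ax + Bu + Ew ∈ C_i} and
    T₀ = X, T_{i+1} = (T_i ⊖ AⁱEW) ⊕ Aⁱ(−BU):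
    for every i, C_i ⊆ ⋂_{j=0}^{i} (Aʲ)⁻¹ T_j. -/
theorem C_subset_inter_preimage_T {n m p : ℕ}
    (A : Matrix (Fin n) (Fin n) ℝ) (B : Matrix (Fin n) (Fin m) ℝ)
    (E : Matrix (Fin n) (Fin p) ℝ)
    (X : Set (Fin n → ℝ)) (U : Set (Fin m → ℝ)) (W : Set (Fin p → ℝ))
    (hXc : IsCompact X) (hXcv : Convex ℝ X) (hX0 : 0 ∈ interior X)
    (hUc : IsCompact U) (hUcv : Convex ℝ U) (hU0 : 0 ∈ interior U)
    (hWc : IsCompact W) (hWcv : Convex ℝ W) (hW0 : (0 : Fin p → ℝ) ∈ W)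
    (C : ℕ → Set (Fin n → ℝ))
    (hC0 : C 0 = X)
    (hCs : ∀ i, C (i + 1)
      = {x ∈ X | ∃ u ∈ U, ∀ w ∈ W, A *ᵥ x + B *ᵥ u + E *ᵥ w ∈ C i})
    (T : ℕ → Set (Fin n → ℝ))
    (hT0 : T 0 = X)
    (hTs : ∀ i, T (i + 1)
      = msum (mdiff (T i) ((A ^ i).mulVec '' (E.mulVec '' W)))
          ((A ^ i).mulVec '' ((fun u => -u) '' (B.mulVec '' U)))) :
    ∀ i, C i ⊆ ⋂ j ∈ Set.Iic i, (A ^ j).mulVec ⁻¹' (T j) :=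
  C_subset_inter_preimage_T_general A B E X U W C hC0 hCs T hT0 hTs
end

section
/- If U = {0} (no control), B arbitrary, then the recursion T₀ = X, T_{i+1} = T_i ⊖ AⁱEW yields T_i = X ⊖ R_i with R_i := ⊕_{j=0}^{i-1} AʲEW, and moreover the i-step robust admissible set satisfies C_i = ⋂_{j=0}^{i} (Aʲ)⁻¹(X ⊖ R_j) exactly (with equality). -/
/-!
Since (X ⊖ B) ⊖ D = X ⊖ (B ⊕ D), peeling off the disturbances one at a time gives T_i = X ⊖ R_i.
For C_i, induction shows that x ∈ C_{i+1} iff x ∈ X and, for every w ∈ W and j ≤ i,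
A^{j+1}x + AʲEw ∈ X ⊖ R_j; quantifying over w turns the latter into
A^{j+1}x ∈ (X ⊖ R_j) ⊖ AʲEW = X ⊖ R_{j+1}.
-/

open Matrix

section Minkowski

variable {n : ℕ}

theorem mdiff_singleton_zero (X : Set (Fin n → ℝ)) : mdiff X {0} = X := by
  ext x
  simp [mdiff]

theorem mdiff_mdiff_s14 (X B D : Set (Fin n → ℝ)) : mdiff (mdiff X B) D = mdiff X (msum B D) := by
  ext x
  simp only [mdiff, msum, Set.mem_ofPred_eq]
  constructor
  · rintro h _ ⟨b, hb, d, hd, rfl⟩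
    simpa [add_assoc] using h d hd b hb
  · intro h d hd b hb
    simpa [add_assoc] using h (b + d) ⟨b, hb, d, hd, rfl⟩

theorem eq_mdiff_bigMsum_of_rec (X : Set (Fin n → ℝ)) (D T : ℕ → Set (Fin n → ℝ))
    (hT0 : T 0 = X) (hTs : ∀ i, T (i + 1) = mdiff (T i) (D i)) (i : ℕ) :
    T i = mdiff X (bigMsum i D) := by
  induction i with
  | zero => rw [hT0, bigMsum, mdiff_singleton_zero]
  | succ i ih => rw [hTs, ih, mdiff_mdiff_s14, bigMsum]

end Minkowski

section Autonomous

variable {n p : ℕ} (A : Matrix (Fin n) (Fin n) ℝ) (E : Matrix (Fin n) (Fin p) ℝ)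
  (X : Set (Fin n → ℝ)) (W : Set (Fin p → ℝ))

theorem pow_succ_mulVec_mem_mdiff_msum_iff (R : Set (Fin n → ℝ)) (j : ℕ) (x : Fin n → ℝ) :
    (A ^ (j + 1)) *ᵥ x ∈ mdiff X (msum R ((A ^ j).mulVec '' (E.mulVec '' W))) ↔
      ∀ w ∈ W, (A ^ j) *ᵥ (A *ᵥ x + E *ᵥ w) ∈ mdiff X R := by
  rw [← mdiff_mdiff_s14]
  simp [mdiff, mulVec_add, mulVec_mulVec, pow_succ, add_comm]

theorem mem_iff_forall_pow_mulVec_mem_mdiff (C : ℕ → Set (Fin n → ℝ)) (hC0 : C 0 = X)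
    (hCs : ∀ i, C (i + 1) = {x ∈ X | ∀ w ∈ W, A *ᵥ x + E *ᵥ w ∈ C i}) (i : ℕ) (x : Fin n → ℝ) :
    x ∈ C i ↔ ∀ j < i + 1,
      (A ^ j) *ᵥ x ∈ mdiff X (bigMsum j fun k => (A ^ k).mulVec '' (E.mulVec '' W)) := by
  induction i generalizing x with
  | zero => simp [hC0, bigMsum, mdiff_singleton_zero]
  | succ i ih =>
    rw [hCs, Set.mem_ofPred_eq, Nat.forall_lt_succ_left]
    simp only [ih, pow_zero, one_mulVec, bigMsum, mdiff_singleton_zero,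
      pow_succ_mulVec_mem_mdiff_msum_iff]
    exact and_congr_right' ⟨fun h j hj w hw => h w hw j hj, fun h w hw j hj => h j hj w hw⟩

end Autonomous

theorem autonomous_T_and_C_general {n p : ℕ}
    (A : Matrix (Fin n) (Fin n) ℝ) (E : Matrix (Fin n) (Fin p) ℝ)
    (X : Set (Fin n → ℝ)) (W : Set (Fin p → ℝ))
    (T : ℕ → Set (Fin n → ℝ))
    (hT0 : T 0 = X)
    (hTs : ∀ i, T (i + 1) = mdiff (T i) ((A ^ i).mulVec '' (E.mulVec '' W)))
    (C : ℕ → Set (Fin n → ℝ))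
    (hC0 : C 0 = X)
    (hCs : ∀ i, C (i + 1) = {x ∈ X | ∀ w ∈ W, A *ᵥ x + E *ᵥ w ∈ C i})
    (R : ℕ → Set (Fin n → ℝ))
    (hR : ∀ i, R i = bigMsum i (fun j => (A ^ j).mulVec '' (E.mulVec '' W))) :
    (∀ i, T i = mdiff X (R i)) ∧
    (∀ i, C i = ⋂ j ∈ Set.Iic i, (A ^ j).mulVec ⁻¹' (mdiff X (R j))) := by
  obtain rfl : R = _ := funext hR
  refine ⟨eq_mdiff_bigMsum_of_rec X _ T hT0 hTs, fun i => ?_⟩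
  ext x
  simpa [Nat.lt_succ_iff] using mem_iff_forall_pow_mulVec_mem_mdiff A E X W C hC0 hCs i x

/-- Autonomous case (U = {0}): with T₀ = X, T_{i+1} = T_i ⊖ AⁱEW, and
    R_i = ⊕_{j=0}^{i-1} AʲEW, we have T_i = X ⊖ R_i, and the i-step robust
    admissible sets satisfy C_i = ⋂_{j=0}^{i} (Aʲ)⁻¹(X ⊖ R_j) with equality. -/
theorem autonomous_T_and_C {n p : ℕ}
    (A : Matrix (Fin n) (Fin n) ℝ) (E : Matrix (Fin n) (Fin p) ℝ)
    (X : Set (Fin n → ℝ)) (W : Set (Fin p → ℝ))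
    (hXc : IsCompact X) (hXcv : Convex ℝ X) (hX0 : (0 : Fin n → ℝ) ∈ X)
    (hWc : IsCompact W) (hWcv : Convex ℝ W) (hW0 : (0 : Fin p → ℝ) ∈ W)
    (T : ℕ → Set (Fin n → ℝ))
    (hT0 : T 0 = X)
    (hTs : ∀ i, T (i + 1) = mdiff (T i) ((A ^ i).mulVec '' (E.mulVec '' W)))
    (C : ℕ → Set (Fin n → ℝ))
    (hC0 : C 0 = X)
    (hCs : ∀ i, C (i + 1) = {x ∈ X | ∀ w ∈ W, A *ᵥ x + E *ᵥ w ∈ C i})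
    (R : ℕ → Set (Fin n → ℝ))
    (hR : ∀ i, R i = bigMsum i (fun j => (A ^ j).mulVec '' (E.mulVec '' W))) :
    (∀ i, T i = mdiff X (R i)) ∧
    (∀ i, C i = ⋂ j ∈ Set.Iic i, (A ^ j).mulVec ⁻¹' (mdiff X (R j))) :=
  autonomous_T_and_C_general A E X W T hT0 hTs C hC0 hCs R hR
end

section
/- If ρ ≥ 1 and α > 1/(1+ρ), then for all sufficiently large i, α(ρ^{i−1}) − (1−2α)·(sum_{j=0}^{i-2} ρʲ) exceeds any fixed constant H ≥ 0; consequently (under the setting of the main theorem with dominant real eigenvalue ρ ≥ 1 of Aᵀ with eigenvector v, h_{BU}(v) > 0) there exists i⋆ with S_{i⋆}^α = ∅. -/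
/-!
Pairing with the left eigenvector `v` turns `Aʲ B u` into `ρʲ (v ⬝ᵥ B u)`. Let `u⋆ ∈ U` maximise
`v ⬝ᵥ B u` and `h = v ⬝ᵥ B u⋆ > 0`; since `U = -U`, every point of `⊕_{j<k} AʲBU` pairs with `v`
to at most `h ∑_{j<k} ρʲ` in absolute value, and `±∑_{j<k} AʲBu⋆` attain this bound.
A point of `S_{N+1}^α` must absorb both `±α ∑_{j≤N} AʲBu⋆` into `X ⊕ (1-α) ⊕_{j<N} AʲBU`;
subtracting the two memberships bounds `α ρᴺ - (1 - 2α) ∑_{j<N} ρʲ` by `C / h`, where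
`|v ⬝ᵥ x| ≤ C` on `X`. Since `ρᵏ = 1 + (ρ - 1) ∑_{j<k} ρʲ`, that quantity equals
`α + (α(1+ρ) - 1) ∑_{j<k} ρʲ`, which grows at least linearly when `α(1+ρ) > 1`.
-/

open Matrix Pointwise

/-- Support function. -/
noncomputable def supp {n : ℕ} (z : Fin n → ℝ) (S : Set (Fin n → ℝ)) : ℝ :=
  sSup ((fun s => z ⬝ᵥ s) '' S)

open Filter

theorem mul_pow_sub_mul_geom_sum_eq {R : Type*} [CommRing R] (α ρ : R) (k : ℕ) :
    α * ρ ^ k - (1 - 2 * α) * ∑ j ∈ Finset.range k, ρ ^ j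
      = α + (α * (1 + ρ) - 1) * ∑ j ∈ Finset.range k, ρ ^ j := by
  linear_combination (-α) * geom_sum_mul ρ k

theorem natCast_le_geom_sum {ρ : ℝ} (hρ : 1 ≤ ρ) (k : ℕ) :
    (k : ℝ) ≤ ∑ j ∈ Finset.range k, ρ ^ j := by
  calc (k : ℝ) = ∑ _j ∈ Finset.range k, (1 : ℝ) := by simp
    _ ≤ ∑ j ∈ Finset.range k, ρ ^ j := Finset.sum_le_sum fun j _ => one_le_pow₀ hρ

theorem tendsto_mul_pow_sub_mul_geom_sum {α ρ : ℝ} (hρ : 1 ≤ ρ) (hα : 1 < α * (1 + ρ)) :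
    Tendsto (fun k : ℕ => α * ρ ^ k - (1 - 2 * α) * ∑ j ∈ Finset.range k, ρ ^ j)
      atTop atTop := by
  simp_rw [mul_pow_sub_mul_geom_sum_eq]
  refine tendsto_atTop_add_const_left _ _ (tendsto_atTop_mono (fun k => ?_)
    (tendsto_natCast_atTop_atTop.const_mul_atTop (sub_pos.2 hα)))
  exact mul_le_mul_of_nonneg_left (natCast_le_geom_sum hρ k) (sub_pos.2 hα).le

theorem vecMul_pow_of_mulVec_transpose_eq_smul {ι R : Type*} [Fintype ι] [DecidableEq ι]
    [CommSemiring R] {A : Matrix ι ι R} {v : ι → R} {ρ : R} (heig : Aᵀ *ᵥ v = ρ • v) (j : ℕ) :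
    v ᵥ* A ^ j = ρ ^ j • v := by
  induction j with
  | zero => simp
  | succ j ih =>
    rw [pow_succ, ← vecMul_vecMul, ih, smul_vecMul, ← mulVec_transpose, heig, smul_smul, pow_succ]

theorem dotProduct_pow_mulVec_of_mulVec_transpose_eq_smul {ι R : Type*} [Fintype ι]
    [DecidableEq ι] [CommSemiring R] {A : Matrix ι ι R} {v : ι → R} {ρ : R}
    (heig : Aᵀ *ᵥ v = ρ • v) (j : ℕ) (w : ι → R) :
    v ⬝ᵥ (A ^ j *ᵥ w) = ρ ^ j * (v ⬝ᵥ w) := by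
  rw [dotProduct_mulVec, vecMul_pow_of_mulVec_transpose_eq_smul heig, smul_dotProduct,
    smul_eq_mul]

theorem dotProduct_sum_pow_mulVec_of_mulVec_transpose_eq_smul {ι R : Type*} [Fintype ι]
    [DecidableEq ι] [CommSemiring R] {A : Matrix ι ι R} {v : ι → R} {ρ : R}
    (heig : Aᵀ *ᵥ v = ρ • v) (k : ℕ) (w : ι → R) :
    v ⬝ᵥ ∑ j ∈ Finset.range k, A ^ j *ᵥ w = (∑ j ∈ Finset.range k, ρ ^ j) * (v ⬝ᵥ w) := by
  simp only [dotProduct_sum, dotProduct_pow_mulVec_of_mulVec_transpose_eq_smul heig,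
    Finset.sum_mul]

section Minkowski

variable {n : ℕ}

theorem sum_mem_bigMsum {f : ℕ → Set (Fin n → ℝ)} {g : ℕ → Fin n → ℝ} {k : ℕ}
    (hg : ∀ j < k, g j ∈ f j) : ∑ j ∈ Finset.range k, g j ∈ bigMsum k f := by
  induction k with
  | zero => simp [bigMsum]
  | succ k ih =>
    rw [Finset.sum_range_succ]
    exact ⟨_, ih fun j hj => hg j (by omega), g k, hg k k.lt_succ_self, rfl⟩

theorem abs_dotProduct_le_of_mem_bigMsum {f : ℕ → Set (Fin n → ℝ)} {w : Fin n → ℝ}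
    {c : ℕ → ℝ} (hf : ∀ j, ∀ y ∈ f j, |w ⬝ᵥ y| ≤ c j) :
    ∀ k, ∀ y ∈ bigMsum k f, |w ⬝ᵥ y| ≤ ∑ j ∈ Finset.range k, c j
  | 0, y, hy => by simp_all [bigMsum]
  | k + 1, _, ⟨a, ha, b, hb, rfl⟩ => by
    rw [dotProduct_add, Finset.sum_range_succ]
    exact (abs_add_le _ _).trans
      (add_le_add (abs_dotProduct_le_of_mem_bigMsum hf k a ha) (hf k b hb))

theorem abs_dotProduct_le_of_mem_smul_set {s : Set (Fin n → ℝ)} {w y : Fin n → ℝ} {c t : ℝ}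
    (hs : ∀ z ∈ s, |w ⬝ᵥ z| ≤ c) (hy : y ∈ t • s) : |w ⬝ᵥ y| ≤ |t| * c := by
  obtain ⟨z, hz, rfl⟩ := Set.mem_smul_set.1 hy
  rw [dotProduct_smul, smul_eq_mul, abs_mul]
  exact mul_le_mul_of_nonneg_left (hs z hz) (abs_nonneg t)

theorem mdiff_msum_eq_empty {X Q P : Set (Fin n → ℝ)} {v b : Fin n → ℝ} {C q : ℝ}
    (hX : ∀ y ∈ X, |v ⬝ᵥ y| ≤ C) (hQ : ∀ c ∈ Q, |v ⬝ᵥ c| ≤ q)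
    (hb : b ∈ P) (hnegb : -b ∈ P) (hlt : C + q < v ⬝ᵥ b) :
    mdiff (msum X Q) P = ∅ := by
  refine Set.eq_empty_of_forall_notMem fun x hx => ?_
  obtain ⟨y, hy, c, hc, hbx⟩ := hx b hb
  obtain ⟨y', hy', c', hc', hbx'⟩ := hx (-b) hnegb
  have hsplit : v ⬝ᵥ b + v ⬝ᵥ b = (v ⬝ᵥ y - v ⬝ᵥ y') + (v ⬝ᵥ c - v ⬝ᵥ c') := by
    have : b + b = (y - y') + (c - c') := by
      linear_combination (exp := 1) hbx - hbx'
    simpa only [dotProduct_add, dotProduct_sub] using congrArg (v ⬝ᵥ ·) this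
  have := abs_le.1 (hX y hy); have := abs_le.1 (hX y' hy')
  have := abs_le.1 (hQ c hc); have := abs_le.1 (hQ c' hc')
  linarith

theorem abs_dotProduct_pow_mulVec_le_of_isMaxOn {m : ℕ} {A : Matrix (Fin n) (Fin n) ℝ}
    {B : Matrix (Fin n) (Fin m) ℝ} {U : Set (Fin m → ℝ)} {v : Fin n → ℝ} {ρ : ℝ}
    {u : Fin m → ℝ} (hUsym : U = -U) (heig : Aᵀ *ᵥ v = ρ • v) (hρ : 0 ≤ ρ)
    (hmax : IsMaxOn (fun u => v ⬝ᵥ B *ᵥ u) U u) (j : ℕ) :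
    ∀ y ∈ (A ^ j).mulVec '' (B.mulVec '' U), |v ⬝ᵥ y| ≤ ρ ^ j * (v ⬝ᵥ B *ᵥ u) := by
  rintro _ ⟨_, ⟨u', hu', rfl⟩, rfl⟩
  have hnegu' : -u' ∈ U := hUsym ▸ Set.neg_mem_neg.2 hu'
  have hle : v ⬝ᵥ B *ᵥ u' ≤ v ⬝ᵥ B *ᵥ u := hmax hu'
  have hge : v ⬝ᵥ B *ᵥ -u' ≤ v ⬝ᵥ B *ᵥ u := hmax hnegu'
  rw [mulVec_neg, dotProduct_neg] at hge
  rw [dotProduct_pow_mulVec_of_mulVec_transpose_eq_smul heig, abs_mul,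
    abs_of_nonneg (pow_nonneg hρ j)]
  exact mul_le_mul_of_nonneg_left (abs_le.2 ⟨by linarith, hle⟩) (pow_nonneg hρ j)

theorem sum_pow_mulVec_mem_bigMsum {m k : ℕ} {A : Matrix (Fin n) (Fin n) ℝ}
    {B : Matrix (Fin n) (Fin m) ℝ} {U : Set (Fin m → ℝ)} {u : Fin m → ℝ} (hu : u ∈ U) :
    ∑ j ∈ Finset.range k, A ^ j *ᵥ B *ᵥ u ∈
      bigMsum k (fun j => (A ^ j).mulVec '' (B.mulVec '' U)) :=
  sum_mem_bigMsum fun _ _ => ⟨_, ⟨u, hu, rfl⟩, rfl⟩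

theorem exists_isMaxOn_dotProduct_mulVec_pos {m : ℕ} {B : Matrix (Fin n) (Fin m) ℝ}
    {U : Set (Fin m → ℝ)} {v : Fin n → ℝ} (hUc : IsCompact U)
    (hBU : 0 < supp v (B.mulVec '' U)) :
    ∃ u ∈ U, IsMaxOn (fun u => v ⬝ᵥ B *ᵥ u) U u ∧ 0 < v ⬝ᵥ B *ᵥ u := by
  have hUne : U.Nonempty := Set.nonempty_iff_ne_empty.2 (by rintro rfl; simp [supp] at hBU)
  obtain ⟨u, hu, hmax⟩ := hUc.exists_isMaxOn hUne (f := fun u => v ⬝ᵥ B *ᵥ u) (by fun_prop)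
  refine ⟨u, hu, hmax, hBU.trans_le <| csSup_le ((hUne.image _).image _) ?_⟩
  rintro _ ⟨_, ⟨u', hu', rfl⟩, rfl⟩
  exact hmax hu'

end Minkowski

theorem eventually_exceeds_and_S_empty_general {n m : ℕ}
    (A : Matrix (Fin n) (Fin n) ℝ) (B : Matrix (Fin n) (Fin m) ℝ)
    (X : Set (Fin n → ℝ)) (U : Set (Fin m → ℝ))
    (hXc : IsCompact X)
    (hUc : IsCompact U)
    (hUsym : U = -U)
    (α : ℝ) (hα1 : α < 1)
    (v : Fin n → ℝ) (ρ : ℝ) (hρ : 1 ≤ ρ)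
    (heig : Aᵀ *ᵥ v = ρ • v)
    (hBU : 0 < supp v (B.mulVec '' U))
    (halpha : α > 1 / (1 + ρ))
    (S : ℕ → Set (Fin n → ℝ))
    (hS : ∀ i, S i =
      mdiff
        (msum X ((1 - α) • bigMsum (i - 1) (fun j => (A ^ j).mulVec '' (B.mulVec '' U))))
        (α • bigMsum i (fun j => (A ^ j).mulVec '' (B.mulVec '' U)))) :
    (∀ H : ℝ, 0 ≤ H → ∃ N : ℕ, ∀ i ≥ N,
      α * ρ ^ (i - 1) - (1 - 2 * α) * (∑ j ∈ Finset.range (i - 1), ρ ^ j) > H) ∧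
    (∃ istar : ℕ, S istar = ∅) := by
  have hα : 1 < α * (1 + ρ) := by rwa [gt_iff_lt, div_lt_iff₀ (by linarith)] at halpha
  have hgrow := tendsto_mul_pow_sub_mul_geom_sum hρ hα
  refine ⟨fun H _ => eventually_atTop.1
    ((hgrow.comp (tendsto_sub_atTop_nat 1)).eventually_gt_atTop H), ?_⟩
  obtain ⟨u, hu, hmax, hh⟩ := exists_isMaxOn_dotProduct_mulVec_pos hUc hBU
  obtain ⟨C, hC⟩ := hXc.exists_bound_of_continuousOn (f := fun y => v ⬝ᵥ y) (by fun_prop)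
  obtain ⟨N, hN⟩ := eventually_atTop.1 (hgrow.eventually_gt_atTop (C / (v ⬝ᵥ B *ᵥ u)))
  refine ⟨N + 1, ?_⟩
  rw [hS, Nat.add_sub_cancel]
  refine mdiff_msum_eq_empty (fun y hy => Real.norm_eq_abs _ ▸ hC y hy)
    (fun c hc => abs_dotProduct_le_of_mem_smul_set (abs_dotProduct_le_of_mem_bigMsum
      (abs_dotProduct_pow_mulVec_le_of_isMaxOn hUsym heig (by linarith) hmax) N) hc)
    (Set.smul_mem_smul_set (sum_pow_mulVec_mem_bigMsum hu)) ?_ ?_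
  · have hnegu : -u ∈ U := hUsym ▸ Set.neg_mem_neg.2 hu
    convert Set.smul_mem_smul_set (a := α) (sum_pow_mulVec_mem_bigMsum hnegu) using 1
    simp only [mulVec_neg, Finset.sum_neg_distrib, smul_neg]
  · have hgap := hN N le_rfl
    rw [div_lt_iff₀ hh] at hgap
    rw [dotProduct_smul, dotProduct_sum_pow_mulVec_of_mulVec_transpose_eq_smul heig,
      ← Finset.sum_mul, abs_of_pos (by linarith), Finset.sum_range_succ, smul_eq_mul]
    linarith

/-- If ρ ≥ 1 and α > 1/(1+ρ), the scalar quantity α·ρ^{i−1} − (1−2α)·∑_{j=0}^{i-2} ρʲ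
    eventually exceeds any fixed constant H ≥ 0; consequently, in the setting of the
    main theorem, there exists i⋆ with S_{i⋆}^α = ∅. -/
theorem eventually_exceeds_and_S_empty {n m : ℕ}
    (A : Matrix (Fin n) (Fin n) ℝ) (B : Matrix (Fin n) (Fin m) ℝ)
    (X : Set (Fin n → ℝ)) (U : Set (Fin m → ℝ))
    (hXc : IsCompact X) (hXcv : Convex ℝ X) (hX0 : 0 ∈ interior X)
    (hUc : IsCompact U) (hUcv : Convex ℝ U) (hU0 : 0 ∈ interior U)
    (hUsym : U = -U)
    (α : ℝ) (hα0 : 0 < α) (hα1 : α < 1)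
    (v : Fin n → ℝ) (hv : v ≠ 0) (ρ : ℝ) (hρ : 1 ≤ ρ)
    (heig : Aᵀ *ᵥ v = ρ • v)
    (hspec : ∀ μ ∈ spectrum ℂ (A.map (Complex.ofReal ·)), ‖μ‖ ≤ ρ)
    (hBU : 0 < supp v (B.mulVec '' U))
    (halpha : α > 1 / (1 + ρ))
    (S : ℕ → Set (Fin n → ℝ))
    (hS : ∀ i, S i =
      mdiff
        (msum X ((1 - α) • bigMsum (i - 1) (fun j => (A ^ j).mulVec '' (B.mulVec '' U))))
        (α • bigMsum i (fun j => (A ^ j).mulVec '' (B.mulVec '' U)))) :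
    (∀ H : ℝ, 0 ≤ H → ∃ N : ℕ, ∀ i ≥ N,
      α * ρ ^ (i - 1) - (1 - 2 * α) * (∑ j ∈ Finset.range (i - 1), ρ ^ j) > H) ∧
    (∃ istar : ℕ, S istar = ∅) :=
  eventually_exceeds_and_S_empty_general A B X U hXc hUc hUsym α hα1 v ρ hρ heig hBU halpha S hS
end

section
/- Suppose the maximal robust control invariant set C_∞ := ⋂_{i≥0} C_i (with C₀ = X and C_{i+1} = {x ∈ X : ∃ u ∈ U, ∀ w ∈ W, Ax + Bu + Ew ∈ C_i}, where X convex compact, U, W convex compact) has 0 in its interior. Then C_∞ is robust control invariant: for every x ∈ C_∞ there exists u ∈ U such that Ax + Bu + Ew ∈ C_∞ for all w ∈ W. -/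
/-!
Each `C (i + 1)` is the projection onto the state of the compact set of admissible
state–input pairs, so by induction every `C i` is compact and, since the robust predecessor
operator is monotone, the `C i` decrease. For `x ∈ C_∞` the inputs that keep every successor of
`x` in `C i` form a decreasing sequence of nonempty closed subsets of the compact set `U`; any
input in their intersection keeps every successor in `C_∞`.
-/

open Matrix Set

def robustPre {α β γ : Type*} (X : Set α) (U : Set β) (W : Set γ) (f : α → β → γ → α)
    (S : Set α) : Set α :=
  {x ∈ X | ∃ u ∈ U, ∀ w ∈ W, f x u w ∈ S}

namespace robustPre

variable {α β γ : Type*} {X : Set α} {U : Set β} {W : Set γ} {f : α → β → γ → α}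

theorem subset (S : Set α) : robustPre X U W f S ⊆ X := fun _ hx => hx.1

theorem mono {S T : Set α} (hST : S ⊆ T) : robustPre X U W f S ⊆ robustPre X U W f T :=
  fun _ ⟨hxX, u, hu, hw⟩ => ⟨hxX, u, hu, fun w hw' => hST (hw w hw')⟩

theorem antitone_of_succ_eq {C : ℕ → Set α} (hC0 : C 0 = X)
    (hCs : ∀ i, C (i + 1) = robustPre X U W f (C i)) : Antitone C := by
  refine antitone_nat_of_succ_le fun i => ?_
  induction i with
  | zero => rw [hCs, hC0]; exact subset X
  | succ i ih => exact (hCs (i + 1)).trans_le ((mono ih).trans_eq (hCs i).symm)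

variable [TopologicalSpace α] [TopologicalSpace β]

theorem isCompact (hX : IsCompact X) (hU : IsCompact U)
    (hf : ∀ w, Continuous fun q : α × β => f q.1 q.2 w) {S : Set α} (hS : IsClosed S) :
    IsCompact (robustPre X U W f S) := by
  have hpairs : IsCompact ((X ×ˢ U) ∩ ⋂ w ∈ W, (fun q : α × β => f q.1 q.2 w) ⁻¹' S) :=
    (hX.prod hU).inter_right (isClosed_biInter fun w _ => hS.preimage (hf w))
  convert hpairs.image continuous_fst using 1
  ext x
  simp [robustPre, and_assoc]

theorem isCompact_of_succ_eq [T2Space α] (hX : IsCompact X) (hU : IsCompact U)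
    (hf : ∀ w, Continuous fun q : α × β => f q.1 q.2 w) {C : ℕ → Set α} (hC0 : C 0 = X)
    (hCs : ∀ i, C (i + 1) = robustPre X U W f (C i)) (i : ℕ) : IsCompact (C i) := by
  induction i with
  | zero => rwa [hC0]
  | succ i ih => rw [hCs]; exact isCompact hX hU hf ih.isClosed

theorem iInter_subset_of_antitone (hU : IsCompact U) (hf : ∀ x w, Continuous (f x · w))
    {S : ℕ → Set α} (hS : ∀ i, IsClosed (S i)) (hanti : Antitone S) :
    ⋂ i, robustPre X U W f (S i) ⊆ robustPre X U W f (⋂ i, S i) := by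
  intro x hx
  set K : ℕ → Set β := fun i => ⋂ w ∈ W, (f x · w) ⁻¹' S i
  have hK_closed : ∀ i, IsClosed (K i) := fun i =>
    isClosed_biInter fun w _ => (hS i).preimage (hf x w)
  have hK_anti : Antitone K := fun i j hij => iInter₂_mono fun w _ => preimage_mono (hanti hij)
  have hUK : ∀ i, (U ∩ K i).Nonempty := fun i => by
    obtain ⟨-, u, hu, hw⟩ := mem_iInter.1 hx i
    exact ⟨u, hu, mem_iInter₂.2 hw⟩
  -- Finitely many `K i` are all contained in the one with the largest index.
  obtain ⟨u, hu, huK⟩ := hU.inter_iInter_nonempty K hK_closed fun s =>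
    (hUK (s.sup id)).mono <| inter_subset_inter_right U <|
      subset_iInter₂ fun i hi => hK_anti (s.le_sup (f := id) hi)
  exact ⟨(mem_iInter.1 hx 0).1, u, hu, fun w hw =>
    mem_iInter.2 fun i => mem_iInter₂.1 (mem_iInter.1 huK i) w hw⟩

end robustPre

theorem Cinf_robust_control_invariant_general {n m p : ℕ}
    (A : Matrix (Fin n) (Fin n) ℝ) (B : Matrix (Fin n) (Fin m) ℝ)
    (E : Matrix (Fin n) (Fin p) ℝ)
    (X : Set (Fin n → ℝ)) (U : Set (Fin m → ℝ)) (W : Set (Fin p → ℝ))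
    (hXc : IsCompact X)
    (hUc : IsCompact U)
    (C : ℕ → Set (Fin n → ℝ))
    (hC0 : C 0 = X)
    (hCs : ∀ i, C (i + 1)
      = {x ∈ X | ∃ u ∈ U, ∀ w ∈ W, A *ᵥ x + B *ᵥ u + E *ᵥ w ∈ C i}) :
    ∀ x ∈ ⋂ i, C i, ∃ u ∈ U, ∀ w ∈ W, A *ᵥ x + B *ᵥ u + E *ᵥ w ∈ ⋂ i, C i := by
  set f := fun x u w => A *ᵥ x + B *ᵥ u + E *ᵥ w
  have hCs' : ∀ i, C (i + 1) = robustPre X U W f (C i) := hCs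
  have hf : ∀ w, Continuous fun q : (Fin n → ℝ) × (Fin m → ℝ) => f q.1 q.2 w := fun w =>
    ((continuous_const.matrix_mulVec continuous_fst).add
      (continuous_const.matrix_mulVec continuous_snd)).add continuous_const
  have hC_closed : ∀ i, IsClosed (C i) := fun i =>
    (robustPre.isCompact_of_succ_eq hXc hUc hf hC0 hCs' i).isClosed
  intro x hx
  have hx_pre : x ∈ ⋂ i, robustPre X U W f (C i) :=
    mem_iInter.2 fun i => hCs' i ▸ mem_iInter.1 hx (i + 1)
  exact (robustPre.iInter_subset_of_antitone hUc
    (fun x w => (hf w).comp (Continuous.prodMk_right x)) hC_closed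
    (robustPre.antitone_of_succ_eq hC0 hCs') hx_pre).2

/-- If C_∞ := ⋂_i C_i (with C₀ = X and
    C_{i+1} = {x ∈ X : ∃ u ∈ U, ∀ w ∈ W, Ax + Bu + Ew ∈ C_i}) has 0 in its
    interior, then C_∞ is robust control invariant: for every x ∈ C_∞ there
    exists u ∈ U with Ax + Bu + Ew ∈ C_∞ for all w ∈ W. -/
theorem Cinf_robust_control_invariant {n m p : ℕ}
    (A : Matrix (Fin n) (Fin n) ℝ) (B : Matrix (Fin n) (Fin m) ℝ)
    (E : Matrix (Fin n) (Fin p) ℝ)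
    (X : Set (Fin n → ℝ)) (U : Set (Fin m → ℝ)) (W : Set (Fin p → ℝ))
    (hXc : IsCompact X) (hXcv : Convex ℝ X)
    (hUc : IsCompact U) (hUcv : Convex ℝ U) (hU0 : 0 ∈ interior U)
    (hWc : IsCompact W) (hWcv : Convex ℝ W)
    (C : ℕ → Set (Fin n → ℝ))
    (hC0 : C 0 = X)
    (hCs : ∀ i, C (i + 1)
      = {x ∈ X | ∃ u ∈ U, ∀ w ∈ W, A *ᵥ x + B *ᵥ u + E *ᵥ w ∈ C i})
    (hint : 0 ∈ interior (⋂ i, C i)) :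
    ∀ x ∈ ⋂ i, C i, ∃ u ∈ U, ∀ w ∈ W, A *ᵥ x + B *ᵥ u + E *ᵥ w ∈ ⋂ i, C i :=
  Cinf_robust_control_invariant_general A B E X U W hXc hUc C hC0 hCs
end
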